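/- arXiv:2303.14658 — 2 statements merged into one kernel-verified Lean document; each statement's English description precedes it below -/
import Mathlib

section
/- Suppose the excess loss r is σ-sub-Gaussian under P_W ⊗ μ (i.e. log ∫ exp(λ·(r − R)) d(P_W ⊗ μ) ≤ λ²σ²/2 for all λ ∈ ℝ) and that R = ∫ r d(P_W ⊗ μ) > 0. Fix any η with 0 < η < 2R/σ² and set a_η := 1 − ησ²/(2R) (so 0 < a_η < 1). Then gen ≤ ((1 − a_η)/a_η)·R̂ + (1/(n·η·a_η)) ∑_{i=1}^n I(W;Z_i), and moreover R ≤ (1/a_η)·R̂ + (1/(n·η·a_η)) ∑_{i=1}^n I(W;Z_i). -/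
/-!
For each coordinate `i`, the Donsker–Varadhan inequality for the joint law `P_i` of `(W, Z_i)`
against `P_W ⊗ μ`, tested on `-η (r - R)` and combined with the sub-Gaussian bound on the
log-moment generating function, gives `η (R - E_{P_i} r) ≤ I(W;Z_i) + η²σ²/2`. Averaging over
`i` turns `E_{P_i} r` into `R̂`, so `R - R̂ ≤ (1/(nη)) ∑ I(W;Z_i) + ησ²/2`. The choice of `a_η`
makes `ησ²/2 = (1 - a_η) R`, so this rearranges to `a_η R ≤ R̂ + (1/(nη)) ∑ I(W;Z_i)`, and both
bounds follow since `gen = R - R̂`.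
-/

open MeasureTheory Real

/-- Real-valued Kullback–Leibler divergence `D(P‖Q)`,
the integral of the log-likelihood ratio with respect to `P`. -/
noncomputable def klReal {α : Type*} [MeasurableSpace α] (P Q : Measure α) : ℝ :=
  ∫ x, llr P Q x ∂P

variable {W Z : Type*} [MeasurableSpace W] [MeasurableSpace Z]

/-- Population risk `L(w) = ∫ ℓ(w,z) dμ(z)`. -/
noncomputable def popRisk (μ : Measure Z) (ℓ : W × Z → ℝ) (w : W) : ℝ :=
  ∫ z, ℓ (w, z) ∂μ

/-- Empirical risk `L̂(w,s) = (1/n) ∑ i, ℓ(w, s i)`. -/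
noncomputable def empRisk (n : ℕ) (ℓ : W × Z → ℝ) (w : W) (s : Fin n → Z) : ℝ :=
  (1 / (n : ℝ)) * ∑ i, ℓ (w, s i)

/-- Expected generalization error `gen = E_P[L(W) − L̂(W,S_n)]`. -/
noncomputable def genErr (μ : Measure Z) (n : ℕ) (P : Measure (W × (Fin n → Z)))
    (ℓ : W × Z → ℝ) : ℝ :=
  ∫ p, (popRisk μ ℓ p.1 - empRisk n ℓ p.1 p.2) ∂P

/-- Expected empirical excess risk `R̂ = E_P[L̂(W,S_n) − L̂(w*,S_n)]`. -/
noncomputable def empExcess (n : ℕ) (P : Measure (W × (Fin n → Z)))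
    (ℓ : W × Z → ℝ) (wstar : W) : ℝ :=
  ∫ p, (empRisk n ℓ p.1 p.2 - empRisk n ℓ wstar p.2) ∂P

/-- Expected excess risk `R = ∫ r d(P_W ⊗ μ)` where `r(w,z) = ℓ(w,z) − ℓ(w*,z)`. -/
noncomputable def excessRisk (μ : Measure Z) {n : ℕ} (P : Measure (W × (Fin n → Z)))
    (ℓ : W × Z → ℝ) (wstar : W) : ℝ :=
  ∫ p, (ℓ p - ℓ (wstar, p.2)) ∂((P.map Prod.fst).prod μ)

/-- Joint law `P_i` of `(W, Z_i)`: the pushforward of `P` under `(w,z) ↦ (w, z_i)`. -/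
noncomputable def jointLaw {n : ℕ} (P : Measure (W × (Fin n → Z))) (i : Fin n) :
    Measure (W × Z) :=
  P.map fun p => (p.1, p.2 i)

/-- Mutual information `I(W;Z_i) = D(P_i ‖ P_W ⊗ μ)`. -/
noncomputable def mutInfo (μ : Measure Z) {n : ℕ} (P : Measure (W × (Fin n → Z)))
    (i : Fin n) : ℝ :=
  klReal (jointLaw P i) ((P.map Prod.fst).prod μ)

section ChangeOfMeasure

variable {α : Type*} [MeasurableSpace α] {ρ ν : Measure α}
  [IsProbabilityMeasure ρ] [IsProbabilityMeasure ν]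

lemma integral_le_integral_llr_add_log_integral_exp {f : α → ℝ} (hρν : ρ ≪ ν)
    (hfρ : Integrable f ρ) (hfν : Integrable (fun x ↦ exp (f x)) ν)
    (hllr : Integrable (llr ρ ν) ρ) :
    ∫ x, f x ∂ρ ≤ ∫ x, llr ρ ν x ∂ρ + log (∫ x, exp (f x) ∂ν) := by
  have := isProbabilityMeasure_tilted hfν
  -- Donsker–Varadhan: Gibbs' inequality for `ρ` against the tilted measure `ν.tilted f`.
  have hgibbs := InformationTheory.integral_llr_add_sub_measure_univ_nonneg
    (hρν.trans (absolutelyContinuous_tilted hfν)) (integrable_llr_tilted_right hρν hfρ hllr hfν)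
  rw [integral_llr_tilted_right hρν hfρ hfν hllr] at hgibbs
  simp only [probReal_univ] at hgibbs
  linarith

lemma mul_integral_sub_le_integral_llr_add_of_log_integral_exp_le {g : α → ℝ} {c t σ : ℝ}
    (hρν : ρ ≪ ν) (hgρ : Integrable g ρ) (hllr : Integrable (llr ρ ν) ρ)
    (hexp : Integrable (fun x ↦ exp (t * (g x - c))) ν)
    (hmgf : log (∫ x, exp (t * (g x - c)) ∂ν) ≤ t ^ 2 * σ ^ 2 / 2) :
    t * (∫ x, g x ∂ρ - c) ≤ ∫ x, llr ρ ν x ∂ρ + t ^ 2 * σ ^ 2 / 2 := by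
  have hdv := integral_le_integral_llr_add_log_integral_exp (f := fun x ↦ t * (g x - c)) hρν
    ((hgρ.sub (integrable_const c)).const_mul t) hexp hllr
  rw [integral_const_mul, integral_sub hgρ (integrable_const c), integral_const,
    probReal_univ, one_smul] at hdv
  linarith

end ChangeOfMeasure

section Average

variable {α ι : Type*} [MeasurableSpace α] [Fintype ι] [Nonempty ι] {ν : Measure α}
  [IsProbabilityMeasure ν] {ρ : ι → Measure α} [∀ i, IsProbabilityMeasure (ρ i)]

lemma sub_average_integral_le_of_log_integral_exp_le {g : α → ℝ} {c η σ : ℝ} (hη : 0 < η)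
    (hρν : ∀ i, ρ i ≪ ν) (hgρ : ∀ i, Integrable g (ρ i))
    (hllr : ∀ i, Integrable (llr (ρ i) ν) (ρ i))
    (hexp : Integrable (fun x ↦ exp (-η * (g x - c))) ν)
    (hmgf : log (∫ x, exp (-η * (g x - c)) ∂ν) ≤ (-η) ^ 2 * σ ^ 2 / 2) :
    c - 1 / (Fintype.card ι : ℝ) * ∑ i, ∫ x, g x ∂ρ i ≤
      1 / (Fintype.card ι * η) * ∑ i, ∫ x, llr (ρ i) ν x ∂ρ i + η * σ ^ 2 / 2 := by
  have hcard : (0 : ℝ) < Fintype.card ι := by exact_mod_cast Fintype.card_pos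
  have hsum : η * (Fintype.card ι * c - ∑ i, ∫ x, g x ∂ρ i) ≤
      ∑ i, ∫ x, llr (ρ i) ν x ∂ρ i + Fintype.card ι * (η ^ 2 * σ ^ 2 / 2) := by
    have := Finset.sum_le_sum fun i (_ : i ∈ Finset.univ) ↦
      mul_integral_sub_le_integral_llr_add_of_log_integral_exp_le (hρν i) (hgρ i) (hllr i)
        hexp hmgf
    simp only [Finset.sum_add_distrib, Finset.sum_const, Finset.card_univ, nsmul_eq_mul,
      ← Finset.mul_sum, Finset.sum_sub_distrib] at this
    linarith
  calc c - 1 / (Fintype.card ι : ℝ) * ∑ i, ∫ x, g x ∂ρ i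
      = 1 / (Fintype.card ι * η) * (η * (Fintype.card ι * c - ∑ i, ∫ x, g x ∂ρ i)) := by
        field_simp
    _ ≤ 1 / (Fintype.card ι * η) *
        (∑ i, ∫ x, llr (ρ i) ν x ∂ρ i + Fintype.card ι * (η ^ 2 * σ ^ 2 / 2)) := by
        gcongr
    _ = 1 / (Fintype.card ι * η) * ∑ i, ∫ x, llr (ρ i) ν x ∂ρ i + η * σ ^ 2 / 2 := by
        field_simp

end Average

section Learning

variable {μ : Measure Z} {n : ℕ} {P : Measure (W × (Fin n → Z))} {ℓ : W × Z → ℝ} {wstar : W}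

lemma measurable_fst_eval_snd (i : Fin n) :
    Measurable fun p : W × (Fin n → Z) ↦ (p.1, p.2 i) := by
  fun_prop

lemma jointLaw_map_snd [IsProbabilityMeasure μ]
    (hmarg : P.map Prod.snd = Measure.pi fun _ : Fin n ↦ μ) (i : Fin n) :
    (jointLaw P i).map Prod.snd = μ := by
  rw [jointLaw, Measure.map_map measurable_snd (measurable_fst_eval_snd i)]
  exact ((measurePreserving_eval (fun _ ↦ μ) i).comp ⟨measurable_snd, hmarg⟩).map_eq

lemma integrable_comp_fst_eval_snd {g : W × Z → ℝ} {i : Fin n} (hg : Integrable g (jointLaw P i)) :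
    Integrable (fun p ↦ g (p.1, p.2 i)) P :=
  hg.comp_measurable (measurable_fst_eval_snd i)

lemma integrable_comp_snd_jointLaw [IsProbabilityMeasure μ]
    (hmarg : P.map Prod.snd = Measure.pi fun _ : Fin n ↦ μ) {g : Z → ℝ} (hg : Integrable g μ)
    (i : Fin n) : Integrable (fun q : W × Z ↦ g q.2) (jointLaw P i) := by
  rw [← jointLaw_map_snd hmarg i] at hg
  exact hg.comp_measurable measurable_snd

lemma integral_average_jointLaw {g : W × Z → ℝ} (hg : ∀ i, Integrable g (jointLaw P i)) :
    ∫ p, (1 / (n : ℝ)) * ∑ i, g (p.1, p.2 i) ∂P = (1 / (n : ℝ)) * ∑ i, ∫ q, g q ∂jointLaw P i := by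
  rw [integral_const_mul,
    integral_finsetSum _ fun i _ ↦ integrable_comp_fst_eval_snd (hg i)]
  congr 1
  refine Finset.sum_congr rfl fun i _ ↦ ?_
  exact (integral_map (measurable_fst_eval_snd i).aemeasurable (hg i).1).symm

lemma integrable_average_jointLaw {g : W × Z → ℝ} (hg : ∀ i, Integrable g (jointLaw P i)) :
    Integrable (fun p ↦ (1 / (n : ℝ)) * ∑ i, g (p.1, p.2 i)) P :=
  (integrable_finsetSum _ fun i _ ↦ integrable_comp_fst_eval_snd (hg i)).const_mul _

lemma empExcess_eq_average (hr : ∀ i, Integrable (fun q ↦ ℓ q - ℓ (wstar, q.2)) (jointLaw P i)) :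
    empExcess n P ℓ wstar =
      (1 / (n : ℝ)) * ∑ i, ∫ q, (ℓ q - ℓ (wstar, q.2)) ∂jointLaw P i := by
  rw [← integral_average_jointLaw hr, empExcess]
  simp only [empRisk, ← mul_sub, Finset.sum_sub_distrib]

lemma integral_popRisk_fst [IsProbabilityMeasure μ] [IsFiniteMeasure P]
    (hint : Integrable ℓ ((P.map Prod.fst).prod μ)) :
    ∫ p, popRisk μ ℓ p.1 ∂P = ∫ q, ℓ q ∂(P.map Prod.fst).prod μ := by
  rw [integral_prod ℓ hint]
  exact (integral_map measurable_fst.aemeasurable hint.integral_prod_left.1).symm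

lemma genErr_eq_excessRisk_sub_empExcess [IsProbabilityMeasure μ] [IsProbabilityMeasure P]
    (hn : n ≠ 0) (hmarg : P.map Prod.snd = Measure.pi fun _ : Fin n ↦ μ)
    (hint : Integrable ℓ ((P.map Prod.fst).prod μ))
    (hinti : ∀ i, Integrable ℓ (jointLaw P i))
    (hintw : Integrable (fun z ↦ ℓ (wstar, z)) μ) :
    genErr μ n P ℓ = excessRisk μ P ℓ wstar - empExcess n P ℓ wstar := by
  have hw := integrable_comp_snd_jointLaw (W := W) hmarg hintw
  have hwi : ∀ i, ∫ q, ℓ (wstar, q.2) ∂jointLaw P i = ∫ z, ℓ (wstar, z) ∂μ := fun i ↦ by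
    rw [← jointLaw_map_snd hmarg i] at hintw ⊢
    exact (integral_map measurable_snd.aemeasurable hintw.1).symm
  have hP : IsProbabilityMeasure (P.map Prod.fst) :=
    Measure.isProbabilityMeasure_map measurable_fst.aemeasurable
  have hpop : Integrable (fun p ↦ popRisk μ ℓ p.1) P :=
    hint.integral_prod_left.comp_measurable measurable_fst
  have hemp : Integrable (fun p ↦ empRisk n ℓ p.1 p.2) P := integrable_average_jointLaw hinti
  rw [empExcess_eq_average fun i ↦ (hinti i).sub (hw i), genErr, integral_sub hpop hemp,
    integral_popRisk_fst hint, excessRisk, integral_sub hint (hintw.comp_snd _),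
    integral_fun_snd (fun z ↦ ℓ (wstar, z))]
  simp_rw [empRisk]
  rw [integral_average_jointLaw hinti]
  simp only [integral_sub (hinti _) (hw _), hwi, Finset.sum_sub_distrib, Finset.sum_const,
    Finset.card_univ, Fintype.card_fin, nsmul_eq_mul, probReal_univ, one_smul]
  field_simp
  ring

end Learning

lemma sub_le_and_le_of_sub_le_add_mul_sq {R E B η σ a : ℝ} (hR : 0 < R) (hη : 0 < η)
    (hη2 : η < 2 * R / σ ^ 2) (ha : a = 1 - η * σ ^ 2 / (2 * R))
    (h : R - E ≤ B + η * σ ^ 2 / 2) :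
    R - E ≤ (1 - a) / a * E + B / a ∧ R ≤ 1 / a * E + B / a := by
  have hσ : 0 < σ ^ 2 := (sq_nonneg σ).lt_of_ne fun h0 ↦ by
    rw [← h0, div_zero] at hη2
    linarith
  have ha0 : 0 < a := by
    rw [ha, sub_pos, div_lt_one (by positivity)]
    rwa [lt_div_iff₀ hσ] at hη2
  have hvar : η * σ ^ 2 / 2 = (1 - a) * R := by
    rw [ha]
    field_simp
    ring
  have hcore : a * R ≤ E + B := by linarith
  constructor
  · rw [div_mul_eq_mul_div, ← add_div, le_div_iff₀ ha0]
    linarith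
  · rw [div_mul_eq_mul_div, ← add_div, le_div_iff₀ ha0]
    linarith

theorem fast_rate_subGaussian_general
    (μ : Measure Z) [IsProbabilityMeasure μ] (n : ℕ) (hn : 0 < n)
    (P : Measure (W × (Fin n → Z))) [IsProbabilityMeasure P]
    (hmarg : P.map Prod.snd = Measure.pi fun _ : Fin n => μ)
    (ℓ : W × Z → ℝ) (wstar : W)
    (hint : Integrable ℓ ((P.map Prod.fst).prod μ))
    (hinti : ∀ i : Fin n, Integrable ℓ (jointLaw P i))
    (hintw : Integrable (fun z => ℓ (wstar, z)) μ)
    (hac : ∀ i : Fin n, jointLaw P i ≪ (P.map Prod.fst).prod μ)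
    (hIfin : ∀ i : Fin n, Integrable (llr (jointLaw P i) ((P.map Prod.fst).prod μ))
      (jointLaw P i))
    (σ : ℝ)
    (hsubInt : ∀ lam : ℝ,
      Integrable
        (fun p => Real.exp (lam * ((ℓ p - ℓ (wstar, p.2)) - excessRisk μ P ℓ wstar)))
        ((P.map Prod.fst).prod μ))
    (hsub : ∀ lam : ℝ,
      Real.log (∫ p, Real.exp (lam * ((ℓ p - ℓ (wstar, p.2)) - excessRisk μ P ℓ wstar))
          ∂((P.map Prod.fst).prod μ)) ≤ lam ^ 2 * σ ^ 2 / 2)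
    (hR : 0 < excessRisk μ P ℓ wstar)
    (η : ℝ) (hη : 0 < η) (hη2 : η < 2 * excessRisk μ P ℓ wstar / σ ^ 2)
    (aη : ℝ) (haη : aη = 1 - η * σ ^ 2 / (2 * excessRisk μ P ℓ wstar)) :
    genErr μ n P ℓ ≤
      ((1 - aη) / aη) * empExcess n P ℓ wstar +
        (1 / ((n : ℝ) * η * aη)) * ∑ i : Fin n, mutInfo μ P i ∧
    excessRisk μ P ℓ wstar ≤
      (1 / aη) * empExcess n P ℓ wstar +
        (1 / ((n : ℝ) * η * aη)) * ∑ i : Fin n, mutInfo μ P i := by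
  have : Nonempty (Fin n) := Fin.pos_iff_nonempty.mp hn
  have := Measure.isProbabilityMeasure_map (μ := P) measurable_fst.aemeasurable
  have (i : Fin n) : IsProbabilityMeasure (jointLaw P i) :=
    Measure.isProbabilityMeasure_map (measurable_fst_eval_snd i).aemeasurable
  have hr : ∀ i, Integrable (fun q ↦ ℓ q - ℓ (wstar, q.2)) (jointLaw P i) :=
    fun i ↦ (hinti i).sub (integrable_comp_snd_jointLaw hmarg hintw i)
  have hdev := sub_average_integral_le_of_log_integral_exp_le hη hac hr hIfin
    (hsubInt (-η)) (hsub (-η))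
  rw [Fintype.card_fin, ← empExcess_eq_average hr] at hdev
  obtain ⟨hgen, hexcess⟩ := sub_le_and_le_of_sub_le_add_mul_sq hR hη hη2 haη hdev
  rw [genErr_eq_excessRisk_sub_empExcess hn.ne' hmarg hint hinti hintw]
  simp only [mutInfo, klReal]
  exact ⟨hgen.trans_eq (by ring), hexcess.trans_eq (by ring)⟩

theorem fast_rate_subGaussian
    (μ : Measure Z) [IsProbabilityMeasure μ] (n : ℕ) (hn : 0 < n)
    (P : Measure (W × (Fin n → Z))) [IsProbabilityMeasure P]
    (hmarg : P.map Prod.snd = Measure.pi fun _ : Fin n => μ)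
    (ℓ : W × Z → ℝ) (hℓ : Measurable ℓ) (wstar : W)
    (hint : Integrable ℓ ((P.map Prod.fst).prod μ))
    (hinti : ∀ i : Fin n, Integrable ℓ (jointLaw P i))
    (hintw : Integrable (fun z => ℓ (wstar, z)) μ)
    (hac : ∀ i : Fin n, jointLaw P i ≪ (P.map Prod.fst).prod μ)
    (hIfin : ∀ i : Fin n, Integrable (llr (jointLaw P i) ((P.map Prod.fst).prod μ))
      (jointLaw P i))
    (σ : ℝ)
    (hsubInt : ∀ lam : ℝ,
      Integrable
        (fun p => Real.exp (lam * ((ℓ p - ℓ (wstar, p.2)) - excessRisk μ P ℓ wstar)))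
        ((P.map Prod.fst).prod μ))
    (hsub : ∀ lam : ℝ,
      Real.log (∫ p, Real.exp (lam * ((ℓ p - ℓ (wstar, p.2)) - excessRisk μ P ℓ wstar))
          ∂((P.map Prod.fst).prod μ)) ≤ lam ^ 2 * σ ^ 2 / 2)
    (hR : 0 < excessRisk μ P ℓ wstar)
    (η : ℝ) (hη : 0 < η) (hη2 : η < 2 * excessRisk μ P ℓ wstar / σ ^ 2)
    (aη : ℝ) (haη : aη = 1 - η * σ ^ 2 / (2 * excessRisk μ P ℓ wstar)) :
    genErr μ n P ℓ ≤
      ((1 - aη) / aη) * empExcess n P ℓ wstar +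
        (1 / ((n : ℝ) * η * aη)) * ∑ i : Fin n, mutInfo μ P i ∧
    excessRisk μ P ℓ wstar ≤
      (1 / aη) * empExcess n P ℓ wstar +
        (1 / ((n : ℝ) * η * aη)) * ∑ i : Fin n, mutInfo μ P i :=
  fast_rate_subGaussian_general μ n hn P hmarg ℓ wstar hint hinti hintw hac hIfin σ hsubInt hsub hR
    η hη hη2 aη haη
end

section
/- Suppose the loss ℓ itself satisfies the (η,c)-central condition under P_W ⊗ μ for some η > 0 and 0 < c ≤ 1, i.e. 0 < ∫ ℓ d(P_W ⊗ μ) and log ∫ exp(−η·ℓ) d(P_W ⊗ μ) ≤ −c·η·∫ ℓ d(P_W ⊗ μ). Then gen ≤ ((1 − c)/c)·E_P[L̂(W,S_n)] + (1/(c·η·n)) ∑_{i=1}^n I(W;Z_i). -/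
/-!
For each `i`, the Donsker–Varadhan inequality applied to `-η ℓ` and the central condition give
`c η 𝔼_{P_W ⊗ μ}[ℓ] ≤ I(W;Z_i) + η 𝔼_{P_i}[ℓ]`. Since `𝔼_P[L(W)] = 𝔼_{P_W ⊗ μ}[ℓ]` and
`𝔼_P[L̂(W,S_n)]` is the average of the `𝔼_{P_i}[ℓ]`, averaging over `i` yields
`c η 𝔼_P[L(W)] ≤ (1/n) ∑ᵢ I(W;Z_i) + η 𝔼_P[L̂(W,S_n)]`, which rearranges to the bound.
-/

open MeasureTheory Real

variable {W Z : Type*} [MeasurableSpace W] [MeasurableSpace Z]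

section DonskerVaradhan

variable {α : Type*} [MeasurableSpace α] {μ ν : Measure α}
  [IsProbabilityMeasure μ] [IsProbabilityMeasure ν]

lemma integral_llr_nonneg (hμν : μ ≪ ν) (h_int : Integrable (llr μ ν) μ) :
    0 ≤ ∫ x, llr μ ν x ∂μ := by
  simpa using InformationTheory.integral_llr_add_sub_measure_univ_nonneg hμν h_int

/-- Donsker–Varadhan: this is Gibbs' inequality `0 ≤ D(μ ‖ ν.tilted f)`. -/
theorem integral_le_klReal_add_log_integral_exp {f : α → ℝ} (hμν : μ ≪ ν)
    (hfμ : Integrable f μ) (hfν : Integrable (fun x ↦ exp (f x)) ν)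
    (h_int : Integrable (llr μ ν) μ) :
    ∫ x, f x ∂μ ≤ klReal μ ν + log (∫ x, exp (f x) ∂ν) := by
  have := isProbabilityMeasure_tilted hfν
  have hgibbs := integral_llr_nonneg (hμν.trans (absolutelyContinuous_tilted hfν))
    (integrable_llr_tilted_right hμν hfμ h_int hfν)
  rw [integral_llr_tilted_right hμν hfμ hfν h_int] at hgibbs
  rw [klReal]
  linarith

theorem mul_integral_le_klReal_add_of_central {ℓ : α → ℝ} {η c : ℝ} (hμν : μ ≪ ν)
    (hℓμ : Integrable ℓ μ) (hexp : Integrable (fun x ↦ exp (-η * ℓ x)) ν)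
    (h_int : Integrable (llr μ ν) μ)
    (hcentral : log (∫ x, exp (-η * ℓ x) ∂ν) ≤ -c * η * ∫ x, ℓ x ∂ν) :
    c * η * ∫ x, ℓ x ∂ν ≤ klReal μ ν + η * ∫ x, ℓ x ∂μ := by
  have hdv := integral_le_klReal_add_log_integral_exp hμν (hℓμ.const_mul (-η)) hexp h_int
  rw [integral_const_mul] at hdv
  linarith

end DonskerVaradhan

section Risks

variable {W Z : Type*} [MeasurableSpace W] [MeasurableSpace Z] {μ : Measure Z}
  {n : ℕ} {P : Measure (W × (Fin n → Z))} {ℓ : W × Z → ℝ}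

lemma integrable_popRisk [SFinite μ] {ν : Measure W} [SFinite ν]
    (hint : Integrable ℓ (ν.prod μ)) : Integrable (popRisk μ ℓ) ν :=
  hint.integral_prod_left

lemma integrable_popRisk_comp_fst [SFinite μ] [IsFiniteMeasure P]
    (hint : Integrable ℓ ((P.map Prod.fst).prod μ)) :
    Integrable (fun p ↦ popRisk μ ℓ p.1) P :=
  (integrable_map_measure (integrable_popRisk hint).1 measurable_fst.aemeasurable).mp
    (integrable_popRisk hint)

lemma integral_popRisk_comp_fst [SFinite μ] [IsFiniteMeasure P]
    (hint : Integrable ℓ ((P.map Prod.fst).prod μ)) :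
    ∫ p, popRisk μ ℓ p.1 ∂P = ∫ p, ℓ p ∂((P.map Prod.fst).prod μ) := by
  rw [← integral_map measurable_fst.aemeasurable (integrable_popRisk hint).1]
  exact (integral_prod ℓ hint).symm

lemma aemeasurable_coord (i : Fin n) :
    AEMeasurable (fun p : W × (Fin n → Z) ↦ (p.1, p.2 i)) P := by
  fun_prop

lemma integrable_comp_coord {i : Fin n} (hinti : Integrable ℓ (jointLaw P i)) :
    Integrable (fun p ↦ ℓ (p.1, p.2 i)) P :=
  (integrable_map_measure hinti.1 (aemeasurable_coord i)).mp hinti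

lemma integral_comp_coord {i : Fin n} (hinti : Integrable ℓ (jointLaw P i)) :
    ∫ p, ℓ (p.1, p.2 i) ∂P = ∫ p, ℓ p ∂(jointLaw P i) :=
  (integral_map (aemeasurable_coord i) hinti.1).symm

lemma integrable_empRisk (hinti : ∀ i, Integrable ℓ (jointLaw P i)) :
    Integrable (fun p ↦ empRisk n ℓ p.1 p.2) P :=
  (integrable_finsetSum _ fun i _ ↦ integrable_comp_coord (hinti i)).const_mul _

lemma integral_empRisk (hinti : ∀ i, Integrable ℓ (jointLaw P i)) :
    ∫ p, empRisk n ℓ p.1 p.2 ∂P = 1 / (n : ℝ) * ∑ i, ∫ p, ℓ p ∂(jointLaw P i) := by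
  simp only [empRisk]
  rw [integral_const_mul, integral_finsetSum _ fun i _ ↦ integrable_comp_coord (hinti i)]
  simp only [fun i ↦ integral_comp_coord (hinti i)]

lemma genErr_eq [SFinite μ] [IsFiniteMeasure P] (hint : Integrable ℓ ((P.map Prod.fst).prod μ))
    (hinti : ∀ i, Integrable ℓ (jointLaw P i)) :
    genErr μ n P ℓ = ∫ p, ℓ p ∂((P.map Prod.fst).prod μ) -
      1 / (n : ℝ) * ∑ i, ∫ p, ℓ p ∂(jointLaw P i) := by
  rw [genErr, integral_sub (integrable_popRisk_comp_fst hint) (integrable_empRisk hinti),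
    integral_popRisk_comp_fst hint, integral_empRisk hinti]

end Risks

theorem eta_c_central_on_loss_bound_general
    (μ : Measure Z) [IsProbabilityMeasure μ] (n : ℕ) (hn : 0 < n)
    (P : Measure (W × (Fin n → Z))) [IsProbabilityMeasure P]
    (ℓ : W × Z → ℝ)
    (hint : Integrable ℓ ((P.map Prod.fst).prod μ))
    (hinti : ∀ i : Fin n, Integrable ℓ (jointLaw P i))
    (hac : ∀ i : Fin n, jointLaw P i ≪ (P.map Prod.fst).prod μ)
    (hIfin : ∀ i : Fin n, Integrable (llr (jointLaw P i) ((P.map Prod.fst).prod μ))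
      (jointLaw P i))
    (η c : ℝ) (hη : 0 < η) (hc : 0 < c)
    (hmgfInt : Integrable (fun p => Real.exp (-η * ℓ p)) ((P.map Prod.fst).prod μ))
    (hcentral :
      Real.log (∫ p, Real.exp (-η * ℓ p) ∂((P.map Prod.fst).prod μ)) ≤
        -c * η * ∫ p, ℓ p ∂((P.map Prod.fst).prod μ)) :
    genErr μ n P ℓ ≤
      ((1 - c) / c) * (∫ p, empRisk n ℓ p.1 p.2 ∂P) +
        (1 / (c * η * (n : ℝ))) * ∑ i : Fin n, mutInfo μ P i := by
  have : IsProbabilityMeasure (P.map Prod.fst) := Measure.isProbabilityMeasure_map (by fun_prop)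
  have (i : Fin n) : IsProbabilityMeasure (jointLaw P i) :=
    Measure.isProbabilityMeasure_map (aemeasurable_coord i)
  set L := ∫ p, ℓ p ∂((P.map Prod.fst).prod μ)
  set E := ∑ i, ∫ p, ℓ p ∂(jointLaw P i)
  have hcoord (i : Fin n) := mul_integral_le_klReal_add_of_central (hac i) (hinti i) hmgfInt
    (hIfin i) hcentral
  have hsum : n * (c * η * L) ≤ ∑ i, mutInfo μ P i + η * E := by
    simpa [mutInfo, E, Finset.sum_add_distrib, Finset.mul_sum] using
      Finset.sum_le_sum (s := Finset.univ) fun i _ ↦ hcoord i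
  rw [genErr_eq hint hinti, integral_empRisk hinti]
  have hn0 : (n : ℝ) ≠ 0 := by positivity
  have hsplit : (1 - c) / c * (1 / n * E) + 1 / (c * η * n) * ∑ i, mutInfo μ P i =
      (L - 1 / n * E) + (∑ i, mutInfo μ P i + η * E - n * (c * η * L)) / (c * η * n) := by
    field_simp
    ring
  rw [hsplit]
  exact le_add_of_nonneg_right (div_nonneg (sub_nonneg.mpr hsum) (by positivity))

theorem eta_c_central_on_loss_bound
    (μ : Measure Z) [IsProbabilityMeasure μ] (n : ℕ) (hn : 0 < n)
    (P : Measure (W × (Fin n → Z))) [IsProbabilityMeasure P]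
    (hmarg : P.map Prod.snd = Measure.pi fun _ : Fin n => μ)
    (ℓ : W × Z → ℝ) (hℓ : Measurable ℓ) (wstar : W)
    (hint : Integrable ℓ ((P.map Prod.fst).prod μ))
    (hinti : ∀ i : Fin n, Integrable ℓ (jointLaw P i))
    (hintw : Integrable (fun z => ℓ (wstar, z)) μ)
    (hac : ∀ i : Fin n, jointLaw P i ≪ (P.map Prod.fst).prod μ)
    (hIfin : ∀ i : Fin n, Integrable (llr (jointLaw P i) ((P.map Prod.fst).prod μ))
      (jointLaw P i))
    (η c : ℝ) (hη : 0 < η) (hc : 0 < c) (hc1 : c ≤ 1)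
    (hL : 0 < ∫ p, ℓ p ∂((P.map Prod.fst).prod μ))
    (hmgfInt : Integrable (fun p => Real.exp (-η * ℓ p)) ((P.map Prod.fst).prod μ))
    (hcentral :
      Real.log (∫ p, Real.exp (-η * ℓ p) ∂((P.map Prod.fst).prod μ)) ≤
        -c * η * ∫ p, ℓ p ∂((P.map Prod.fst).prod μ)) :
    genErr μ n P ℓ ≤
      ((1 - c) / c) * (∫ p, empRisk n ℓ p.1 p.2 ∂P) +
        (1 / (c * η * (n : ℝ))) * ∑ i : Fin n, mutInfo μ P i :=
  eta_c_central_on_loss_bound_general μ n hn P ℓ hint hinti hac hIfin η c hη hc hmgfInt hcentral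
end
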